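/- Let d ≥ 1 and let U, V be d × d unitary matrices. Define the Haar-averaged fidelity F̄(U,V) := ∫ |⟨ψ| V† U |ψ⟩|² dψ, where the integral is over Haar-random pure states |ψ⟩ in ℂ^d (equivalently, |ψ⟩ = W|e₀⟩ with W drawn from the Haar probability measure on the unitary group U(d) and |e₀⟩ a fixed unit vector). Then C_HST(U,V) = ((d+1)/d) · (1 − F̄(U,V)). -/

import Mathlib

open Matrix Complex MeasureTheory

noncomputable section

/-- The Borel σ-algebra on the unitary group `U(d)` (as a subspace of the matrices). -/
instance (d : ℕ) : MeasurableSpace (Matrix.unitaryGroup (Fin d) ℂ) := borel _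

instance (d : ℕ) : BorelSpace (Matrix.unitaryGroup (Fin d) ℂ) := ⟨rfl⟩

/-- The Hilbert-Schmidt test cost `C_HST(U,V) = 1 - |Tr(V†U)|²/d²` for `d × d` matrices. -/
def CHSTd (d : ℕ) (U V : Matrix (Fin d) (Fin d) ℂ) : ℝ :=
  1 - ‖(Vᴴ * U).trace‖ ^ 2 / (d : ℝ) ^ 2

/-- The fidelity `|⟨ψ| V† U |ψ⟩|²` for the pure state `|ψ⟩ = W e₀`. -/
def fid (d : ℕ) (U V : Matrix (Fin d) (Fin d) ℂ) (e₀ : Fin d → ℂ)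
    (W : Matrix.unitaryGroup (Fin d) ℂ) : ℝ :=
  ‖star ((W : Matrix (Fin d) (Fin d) ℂ).mulVec e₀) ⬝ᵥ
      ((Vᴴ * U).mulVec ((W : Matrix (Fin d) (Fin d) ℂ).mulVec e₀))‖ ^ 2

/-- The Haar-averaged fidelity `F̄(U,V) = ∫ |⟨ψ| V†U |ψ⟩|² dψ`, where `|ψ⟩ = W e₀` with
`W` drawn from the Haar probability measure `μ` on the unitary group `U(d)`. -/
def Fbar (d : ℕ) (U V : Matrix (Fin d) (Fin d) ℂ) (e₀ : Fin d → ℂ)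
    (μ : Measure (Matrix.unitaryGroup (Fin d) ℂ)) : ℝ :=
  ∫ W, fid d U V e₀ W ∂μ

/-!
Write `M = V†U` and `ψ = W e₀`. The fidelity `|⟨ψ|M|ψ⟩|²` is a bilinear expression in `M` and
`M̄` whose coefficients are the fourth moments `E[ψ_a ψ̄_b ψ_c ψ̄_e]`. Left invariance of the Haar
measure lets us replace `ψ` by `Aψ` for any unitary `A`. Diagonal phase matrices kill every moment
whose indices are not paired (`{a, c} ≠ {b, e}`); a Hadamard rotation in the `(p, q)`-plane shows
that `E|ψ_p|⁴` does not depend on `p` and equals `2 E|ψ_p|²|ψ_q|²`; and `‖ψ‖ = 1` fixes the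
remaining constant. Hence `E[ψ_a ψ̄_b ψ_c ψ̄_e] = (δ_ab δ_ce + δ_ae δ_cb) / (d (d + 1))`, so
`F̄ = (|Tr M|² + Tr(M M†)) / (d (d + 1)) = (|Tr M|² + d) / (d (d + 1))`, and the claim is algebra.
-/

open scoped ComplexConjugate

section UnitaryMatrix

variable {n : Type*} [Fintype n] [DecidableEq n]

instance {𝕜 : Type*} [RCLike 𝕜] : CompactSpace (Matrix.unitaryGroup n 𝕜) := by
  have hK : IsCompact (Set.univ.pi fun _ => Set.univ.pi fun _ => Metric.closedBall 0 1 :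
      Set (Matrix n n 𝕜)) :=
    isCompact_univ_pi fun _ => isCompact_univ_pi fun _ => isCompact_closedBall 0 1
  refine isCompact_iff_compactSpace.mp <|
    hK.of_isClosed_subset (isClosed_unitary (R := Matrix n n 𝕜)) fun U hU i _ j _ => ?_
  simpa using entry_norm_bound_of_unitary hU i j

theorem Matrix.diagonal_mem_unitaryGroup {α : Type*} [CommRing α] [StarRing α] {θ : n → α}
    (hθ : ∀ i, star (θ i) * θ i = 1) : Matrix.diagonal θ ∈ Matrix.unitaryGroup n α := by
  rw [Matrix.mem_unitaryGroup_iff', Matrix.star_eq_conjTranspose, Matrix.diagonal_conjTranspose,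
    Matrix.diagonal_mul_diagonal, ← Matrix.diagonal_one]
  exact congrArg _ (funext hθ)

theorem Matrix.star_mulVec_dotProduct_mulVec {α : Type*} [CommRing α] [StarRing α]
    {W : Matrix n n α} (hW : W ∈ Matrix.unitaryGroup n α) (v : n → α) :
    star (W *ᵥ v) ⬝ᵥ (W *ᵥ v) = star v ⬝ᵥ v := by
  rw [Matrix.star_mulVec, Matrix.dotProduct_mulVec, Matrix.vecMul_vecMul,
    ← Matrix.star_eq_conjTranspose, Matrix.mem_unitaryGroup_iff'.mp hW, Matrix.vecMul_one]

end UnitaryMatrix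

theorem Continuous.integrable_of_compactSpace {X E : Type*} [TopologicalSpace X] [CompactSpace X]
    [MeasurableSpace X] [OpensMeasurableSpace X] [NormedAddCommGroup E] {μ : Measure X}
    [IsFiniteMeasureOnCompacts μ] {f : X → E} (hf : Continuous f) : Integrable f μ :=
  hf.integrable_of_hasCompactSupport (HasCompactSupport.of_compactSpace f)

section Quartic

variable {n : Type*} [Fintype n]

def quartic (v : n → ℂ) (a b c e : n) : ℂ := v a * conj (v b) * v c * conj (v e)

theorem quartic_mulVec (A : Matrix n n ℂ) (v : n → ℂ) (a b c e : n) :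
    quartic (A *ᵥ v) a b c e =
      ∑ w, A a w * ∑ z, conj (A b z) * ∑ y, A c y * ∑ x, conj (A e x) * quartic v w z y x := by
  rw [quartic, mul_assoc, mul_assoc]
  simp only [Matrix.mulVec, dotProduct, map_sum, map_mul, Finset.sum_mul]
  simp only [Finset.mul_sum]
  refine Fintype.sum_congr _ _ fun w => Fintype.sum_congr _ _ fun z =>
    Fintype.sum_congr _ _ fun y => Fintype.sum_congr _ _ fun x => ?_
  rw [quartic]
  ring

theorem sum_quartic_self (v : n → ℂ) : ∑ x, ∑ y, quartic v x x y y = (star v ⬝ᵥ v) ^ 2 := by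
  simp only [quartic, dotProduct, sq, Finset.sum_mul_sum, Pi.star_apply, RCLike.star_def]
  refine Fintype.sum_congr _ _ fun x => Fintype.sum_congr _ _ fun y => ?_
  ring

theorem conj_mul_dotProduct_mulVec_eq_sum (M : Matrix n n ℂ) (v : n → ℂ) :
    conj (star v ⬝ᵥ M *ᵥ v) * (star v ⬝ᵥ M *ᵥ v) =
      ∑ a, ∑ b, ∑ c, ∑ e, M a b * conj (M c e) * quartic v b a c e := by
  simp only [dotProduct, Matrix.mulVec, map_sum, map_mul, Finset.mul_sum, Finset.sum_mul]
  refine Fintype.sum_congr _ _ fun a => Fintype.sum_congr _ _ fun b =>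
    Fintype.sum_congr _ _ fun c => Fintype.sum_congr _ _ fun e => ?_
  simp only [quartic, Pi.star_apply, RCLike.star_def, Complex.conj_conj]
  ring

end Quartic

theorem paired_of_forall_phase_eq_one {n : Type*} [DecidableEq n] {a b c e : n}
    (h : ∀ j, (if a = j then I else 1) * conj (if b = j then I else 1) *
      (if c = j then I else 1) * conj (if e = j then I else 1) = 1) :
    (a = b ∧ c = e) ∨ (a = e ∧ c = b) := by
  have ha := h a
  have hc := h c
  have hI : I ≠ 1 := by norm_num [Complex.ext_iff]
  simp only [apply_ite (starRingEnd ℂ), Complex.conj_I, map_one] at ha hc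
  split_ifs at ha hc <;> grind [Complex.I_mul_I]

section Hadamard

variable {n : Type*} [DecidableEq n] {p q : n}

def invSqrtTwo : ℂ := ((√2)⁻¹ : ℝ)

theorem invSqrtTwo_mul_self : invSqrtTwo * invSqrtTwo = 1 / 2 := by
  rw [invSqrtTwo, ← Complex.ofReal_mul, ← mul_inv, Real.mul_self_sqrt zero_le_two]
  norm_num

def hadamardAt (p q : n) : Matrix n n ℂ := Matrix.of fun i j =>
  if i = p then invSqrtTwo * ((if j = p then 1 else 0) + (if j = q then 1 else 0))
  else if i = q then invSqrtTwo * ((if j = p then 1 else 0) - (if j = q then 1 else 0))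
  else if i = j then 1 else 0

@[simp]
theorem conj_hadamardAt_apply (i j : n) : conj (hadamardAt p q i j) = hadamardAt p q i j := by
  simp only [hadamardAt, Matrix.of_apply, invSqrtTwo]
  split_ifs <;> simp [Complex.conj_ofReal]

theorem sum_hadamardAt_mul [Fintype n] (f : n → ℂ) (i : n) :
    ∑ j, hadamardAt p q i j * f j = if i = p then invSqrtTwo * (f p + f q)
      else if i = q then invSqrtTwo * (f p - f q) else f i := by
  simp only [hadamardAt, Matrix.of_apply]
  split_ifs <;> simp [mul_add, mul_sub, add_mul, sub_mul, Finset.sum_add_distrib,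
    Finset.sum_sub_distrib]

theorem hadamardAt_mem_unitaryGroup [Fintype n] (hpq : p ≠ q) :
    hadamardAt p q ∈ Matrix.unitaryGroup n ℂ := by
  have hstar : star (hadamardAt p q) = hadamardAt p q := by
    ext i j
    rw [Matrix.star_apply, RCLike.star_def, conj_hadamardAt_apply]
    simp only [hadamardAt, Matrix.of_apply]
    split_ifs <;> grind
  rw [Matrix.mem_unitaryGroup_iff', hstar, Matrix.ext_iff_mulVec]
  intro v
  ext i
  rw [← Matrix.mulVec_mulVec, Matrix.one_mulVec]
  simp only [Matrix.mulVec, dotProduct, sum_hadamardAt_mul, if_neg hpq.symm]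
  split_ifs with hp hq
  · subst hp; linear_combination 2 * v i * invSqrtTwo_mul_self
  · subst hq; linear_combination 2 * v i * invSqrtTwo_mul_self
  · rfl

end Hadamard

section FourthMoment

variable {d : ℕ} (μ : Measure (Matrix.unitaryGroup (Fin d) ℂ)) (e₀ : Fin d → ℂ)

def haarState (W : Matrix.unitaryGroup (Fin d) ℂ) : Fin d → ℂ :=
  (W : Matrix (Fin d) (Fin d) ℂ) *ᵥ e₀

@[fun_prop]
theorem continuous_quartic_haarState (a b c e : Fin d) :
    Continuous fun W => quartic (haarState e₀ W) a b c e := by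
  unfold quartic haarState
  fun_prop

theorem haarState_mul (A W : Matrix.unitaryGroup (Fin d) ℂ) :
    haarState e₀ (A * W) = (A : Matrix (Fin d) (Fin d) ℂ) *ᵥ haarState e₀ W :=
  (Matrix.mulVec_mulVec _ _ _).symm

def fourthMoment (a b c e : Fin d) : ℂ :=
  ∫ W, quartic (haarState e₀ W) a b c e ∂μ

theorem fourthMoment_swap_unconj (a b c e : Fin d) :
    fourthMoment μ e₀ a b c e = fourthMoment μ e₀ c b a e := by
  unfold fourthMoment quartic
  congr 1 with W
  ring

theorem fourthMoment_swap_conj (a b c e : Fin d) :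
    fourthMoment μ e₀ a b c e = fourthMoment μ e₀ a e c b := by
  unfold fourthMoment quartic
  congr 1 with W
  ring

theorem fourthMoment_eq_sum_of_mem_unitaryGroup [μ.IsHaarMeasure] {A : Matrix (Fin d) (Fin d) ℂ}
    (hA : A ∈ Matrix.unitaryGroup (Fin d) ℂ) (a b c e : Fin d) :
    fourthMoment μ e₀ a b c e = ∑ w, A a w * ∑ z, conj (A b z) * ∑ y, A c y *
      ∑ x, conj (A e x) * fourthMoment μ e₀ w z y x := by
  rw [fourthMoment, ← integral_mul_left_eq_self _ ⟨A, hA⟩]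
  simp only [haarState_mul, quartic_mulVec]
  simp (disch := exact fun _ _ => (by fun_prop : Continuous _).integrable_of_compactSpace) only
    [integral_finsetSum, integral_const_mul]
  rfl

theorem fourthMoment_eq_phase_mul [μ.IsHaarMeasure] {θ : Fin d → ℂ}
    (hθ : ∀ i, star (θ i) * θ i = 1) (a b c e : Fin d) :
    fourthMoment μ e₀ a b c e =
      θ a * conj (θ b) * θ c * conj (θ e) * fourthMoment μ e₀ a b c e := by
  conv_lhs =>
    rw [fourthMoment_eq_sum_of_mem_unitaryGroup μ e₀ (Matrix.diagonal_mem_unitaryGroup hθ)]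
  simp [Matrix.diagonal_apply, apply_ite (starRingEnd ℂ), mul_assoc]

theorem fourthMoment_eq_zero_of_not_paired [μ.IsHaarMeasure] {a b c e : Fin d}
    (h : ¬((a = b ∧ c = e) ∨ (a = e ∧ c = b))) : fourthMoment μ e₀ a b c e = 0 := by
  by_contra hT
  refine h (paired_of_forall_phase_eq_one fun j => ?_)
  have hθ : ∀ i, star (if i = j then I else 1) * (if i = j then I else 1) = 1 := by
    intro i
    split_ifs <;> simp
  exact (mul_eq_right₀ hT).mp (fourthMoment_eq_phase_mul μ e₀ hθ a b c e).symm

theorem fourthMoment_diag_eq_and_eq_two_mul [μ.IsHaarMeasure] {p q : Fin d} (hpq : p ≠ q) :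
    fourthMoment μ e₀ p p p p = fourthMoment μ e₀ q q q q ∧
      fourthMoment μ e₀ p p p p = 2 * fourthMoment μ e₀ p p q q := by
  have hs : invSqrtTwo ^ 4 = 1 / 4 := by
    rw [show invSqrtTwo ^ 4 = (invSqrtTwo * invSqrtTwo) ^ 2 by ring, invSqrtTwo_mul_self]
    norm_num
  have hexp : fourthMoment μ e₀ p p p p = (fourthMoment μ e₀ p p p p +
        fourthMoment μ e₀ q q q q + 4 * fourthMoment μ e₀ p p q q) / 4 ∧
      fourthMoment μ e₀ q q q q = (fourthMoment μ e₀ p p p p +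
        fourthMoment μ e₀ q q q q + 4 * fourthMoment μ e₀ p p q q) / 4 := by
    constructor <;>
    · conv_lhs =>
        rw [fourthMoment_eq_sum_of_mem_unitaryGroup μ e₀ (hadamardAt_mem_unitaryGroup hpq)]
      simp only [conj_hadamardAt_apply, sum_hadamardAt_mul, ↓reduceIte, hpq, hpq.symm,
        fourthMoment_eq_zero_of_not_paired μ e₀, and_false, and_true, or_self, not_false_eq_true,
        mul_zero, add_zero, zero_add]
      rw [fourthMoment_swap_conj μ e₀ p q q p, fourthMoment_swap_unconj μ e₀ q p p q,
        fourthMoment_swap_unconj μ e₀ q q p p, fourthMoment_swap_conj μ e₀ p q q p]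
      linear_combination (fourthMoment μ e₀ p p p p + fourthMoment μ e₀ q q q q +
        4 * fourthMoment μ e₀ p p q q) * hs
  obtain ⟨h₁, h₂⟩ := hexp
  exact ⟨by linear_combination h₁ - h₂, by linear_combination (3 * h₁ + h₂) / 2⟩

theorem sum_fourthMoment_pair_eq_one [IsProbabilityMeasure μ] (he₀ : star e₀ ⬝ᵥ e₀ = 1) :
    ∑ x, ∑ y, fourthMoment μ e₀ x x y y = 1 := by
  have hpt : ∀ W, ∑ x, ∑ y, quartic (haarState e₀ W) x x y y = 1 := fun W => by
    rw [sum_quartic_self, haarState, Matrix.star_mulVec_dotProduct_mulVec W.2, he₀, one_pow]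
  calc ∑ x, ∑ y, fourthMoment μ e₀ x x y y
      = ∫ W, ∑ x, ∑ y, quartic (haarState e₀ W) x x y y ∂μ := by
        simp (disch := exact fun _ _ => (by fun_prop : Continuous _).integrable_of_compactSpace)
          only [integral_finsetSum]
        rfl
    _ = 1 := by simp [hpt]

theorem fourthMoment_pair_eq [μ.IsHaarMeasure] [IsProbabilityMeasure μ]
    (he₀ : star e₀ ⬝ᵥ e₀ = 1) (a c : Fin d) :
    fourthMoment μ e₀ a a c c = (1 + if a = c then 1 else 0) / (d * (d + 1)) := by
  set m := fourthMoment μ e₀ a a a a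
  have hdiag : ∀ x, fourthMoment μ e₀ x x x x = m := fun x => by
    rcases eq_or_ne x a with rfl | hxa
    · rfl
    · exact (fourthMoment_diag_eq_and_eq_two_mul μ e₀ hxa).1
  have hval : ∀ x y, fourthMoment μ e₀ x x y y = (1 + if x = y then 1 else 0) / 2 * m := by
    intro x y
    split_ifs with hxy
    · rw [hxy, hdiag]
      ring
    · linear_combination -(fourthMoment_diag_eq_and_eq_two_mul μ e₀ hxy).2 / 2 + hdiag x / 2
  have hsum := sum_fourthMoment_pair_eq_one μ e₀ he₀
  simp only [hval, add_div, add_mul, Finset.sum_add_distrib, ite_div, ite_mul, zero_div, zero_mul,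
    Finset.sum_ite_eq, Finset.mem_univ, if_true, Finset.sum_const, Finset.card_univ,
    Fintype.card_fin, nsmul_eq_mul] at hsum
  have hm : m * (d * (d + 1)) = 2 := by linear_combination 2 * hsum
  have hd : (d : ℂ) * (d + 1) ≠ 0 :=
    mul_ne_zero (Nat.cast_ne_zero.mpr a.pos.ne') (Nat.cast_add_one_ne_zero d)
  rw [hval, eq_div_iff hd, mul_assoc, hm]
  ring

theorem fourthMoment_eq [μ.IsHaarMeasure] [IsProbabilityMeasure μ] (he₀ : star e₀ ⬝ᵥ e₀ = 1)
    (a b c e : Fin d) :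
    fourthMoment μ e₀ a b c e = ((if a = b ∧ c = e then 1 else 0) +
      (if a = e ∧ c = b then 1 else 0)) / (d * (d + 1)) := by
  by_cases h₁ : a = b ∧ c = e
  · obtain ⟨rfl, rfl⟩ := h₁
    rw [fourthMoment_pair_eq μ e₀ he₀]
    simp [eq_comm]
  by_cases h₂ : a = e ∧ c = b
  · obtain ⟨rfl, rfl⟩ := h₂
    rw [fourthMoment_swap_conj, fourthMoment_pair_eq μ e₀ he₀]
    simp_all [eq_comm]
  rw [fourthMoment_eq_zero_of_not_paired μ e₀ (not_or.2 ⟨h₁, h₂⟩)]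
  simp [h₁, h₂]

theorem integral_conj_mul_dotProduct_mulVec [μ.IsHaarMeasure] [IsProbabilityMeasure μ]
    (he₀ : star e₀ ⬝ᵥ e₀ = 1) (M : Matrix (Fin d) (Fin d) ℂ) :
    ∫ W, conj (star (haarState e₀ W) ⬝ᵥ M *ᵥ haarState e₀ W) *
        (star (haarState e₀ W) ⬝ᵥ M *ᵥ haarState e₀ W) ∂μ =
      (M.trace * conj M.trace + (M * Mᴴ).trace) / (d * (d + 1)) := by
  simp only [conj_mul_dotProduct_mulVec_eq_sum]
  simp (disch := exact fun _ _ => (by fun_prop : Continuous _).integrable_of_compactSpace) only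
    [integral_finsetSum, integral_const_mul]
  change ∑ a, ∑ b, ∑ c, ∑ e, M a b * conj (M c e) * fourthMoment μ e₀ b a c e = _
  simp only [fourthMoment_eq μ e₀ he₀, ← mul_div_assoc, ← Finset.sum_div]
  congr 1
  simp [mul_add, Finset.sum_add_distrib, ite_and, Matrix.trace, Matrix.mul_apply,
    Finset.sum_mul_sum, map_sum]

theorem ofReal_Fbar [μ.IsHaarMeasure] [IsProbabilityMeasure μ] (he₀ : star e₀ ⬝ᵥ e₀ = 1)
    (U V : Matrix (Fin d) (Fin d) ℂ) :
    (Fbar d U V e₀ μ : ℂ) = ((Vᴴ * U).trace * conj (Vᴴ * U).trace +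
      (Vᴴ * U * (Vᴴ * U)ᴴ).trace) / (d * (d + 1)) := by
  rw [← integral_conj_mul_dotProduct_mulVec μ e₀ he₀, Fbar, ← integral_complex_ofReal]
  congr 1 with W
  rw [fid, Complex.ofReal_pow, ← Complex.conj_mul']
  rfl

end FourthMoment

theorem stmt3 (d : ℕ) (hd : 1 ≤ d) (U V : Matrix (Fin d) (Fin d) ℂ)
    (hU : U ∈ Matrix.unitaryGroup (Fin d) ℂ)
    (hV : V ∈ Matrix.unitaryGroup (Fin d) ℂ)
    (e₀ : Fin d → ℂ) (he₀ : star e₀ ⬝ᵥ e₀ = 1)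
    (μ : Measure (Matrix.unitaryGroup (Fin d) ℂ))
    [μ.IsHaarMeasure] [IsProbabilityMeasure μ] :
    CHSTd d U V = ((d : ℝ) + 1) / d * (1 - Fbar d U V e₀ μ) := by
  have hM : Vᴴ * U * (Vᴴ * U)ᴴ = 1 := by
    rw [← Matrix.star_eq_conjTranspose, ← Matrix.star_eq_conjTranspose,
      ← Matrix.mem_unitaryGroup_iff]
    exact mul_mem (Unitary.star_mem hV) hU
  have hd₀ : (d : ℂ) ≠ 0 := Nat.cast_ne_zero.mpr (by omega)
  apply Complex.ofReal_injective
  push_cast [CHSTd, ofReal_Fbar μ e₀ he₀, hM, Matrix.trace_one, Fintype.card_fin,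
    Complex.mul_conj']
  field_simp
  ring
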